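/- arXiv:2012.00960 — 2 statements merged into one kernel-verified Lean document; each statement's English description precedes it below -/
import Mathlib

section
/- Let f be a measurable function on (0,∞) and a ≥ 0 such that f(x)e^{-ax} is integrable and ∫₀^∞ f(x) e^{-sx} dx = 0 for all s > a. Then f = 0 almost everywhere on (0,∞). -/
/-!
With `h x = f x * exp (-a * x)` the hypothesis gives `∫ q (exp (-x)) * h x = 0` over `(0, ∞)` for
every polynomial `q` with `q 0 = 0`. By Weierstrass these `q ∘ exp (-·)` approximate
`G ∘ exp (-·)` uniformly on `(0, ∞)` for every `G` continuous on `[0, 1]` with `G 0 = 0`, and every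
test function supported in `(0, ∞)` is of this form with `G t = g (-log t)`. Hence `h`, and with it
`f`, vanishes almost everywhere on `(0, ∞)`.
-/

open MeasureTheory Real Set Filter Polynomial Topology

-- As `Real.log 0 = 0`, the function takes the value `g 0` at `0`.
theorem Continuous.comp_neg_log_of_hasCompactSupport {g : ℝ → ℝ} (hg : Continuous g)
    (hgc : HasCompactSupport g) (hg0 : g 0 = 0) : Continuous fun t => g (-Real.log t) := by
  refine continuous_iff_continuousAt.2 fun t => ?_
  rcases eq_or_ne t 0 with rfl | ht
  · rw [← continuousWithinAt_compl_self, ContinuousWithinAt, log_zero, neg_zero, hg0]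
    exact (hgc.is_zero_at_infty.mono_left atTop_le_cocompact).comp
      (tendsto_neg_atBot_atTop.comp tendsto_log_nhdsNE_zero)
  · exact hg.continuousAt.comp (Real.continuousAt_log ht).neg

theorem exists_polynomial_near_of_continuousOn_of_eq_zero {a b c : ℝ} {G : ℝ → ℝ}
    (hG : ContinuousOn G (Icc a b)) (hc : c ∈ Icc a b) (hGc : G c = 0) {ε : ℝ} (hε : 0 < ε) :
    ∃ q : ℝ[X], q.eval c = 0 ∧ ∀ t ∈ Icc a b, |q.eval t - G t| < ε := by
  obtain ⟨p, hp⟩ := exists_polynomial_near_of_continuousOn a b G hG (ε / 2) (half_pos hε)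
  refine ⟨p - C (p.eval c), by simp, fun t ht => ?_⟩
  have hpc := hp c hc
  rw [hGc, sub_zero] at hpc
  calc |(p - C (p.eval c)).eval t - G t| = |(p.eval t - G t) - p.eval c| := by
        rw [eval_sub, eval_C, sub_right_comm]
    _ ≤ |p.eval t - G t| + |p.eval c| := abs_sub _ _
    _ < ε / 2 + ε / 2 := add_lt_add (hp t ht) hpc
    _ = ε := add_halves ε

theorem exp_neg_mem_Icc {x : ℝ} (hx : 0 ≤ x) : exp (-x) ∈ Icc 0 1 :=
  ⟨(exp_pos _).le, exp_le_one_iff.2 (neg_nonpos.2 hx)⟩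

section Moments

variable {h : ℝ → ℝ}

theorem integrableOn_comp_exp_neg_mul (hh : IntegrableOn h (Ioi 0)) {φ : ℝ → ℝ}
    (hφ : ContinuousOn φ (Icc 0 1)) : IntegrableOn (fun x => φ (exp (-x)) * h x) (Ioi 0) := by
  have hmaps : MapsTo (fun x => exp (-x)) (Ioi 0) (Icc 0 1) := fun _ hx =>
    exp_neg_mem_Icc (le_of_lt hx)
  obtain ⟨B, hB⟩ := isCompact_Icc.exists_bound_of_continuousOn hφ
  refine hh.bdd_mul (c := B)
    ((hφ.comp (by fun_prop) hmaps).aestronglyMeasurable measurableSet_Ioi) ?_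
  exact (ae_restrict_iff' measurableSet_Ioi).2 (Eventually.of_forall fun x hx => hB _ (hmaps hx))

variable (hh : IntegrableOn h (Ioi 0))
  (hmom : ∀ n : ℕ, ∫ x in Ioi 0, exp (-x) ^ (n + 1) * h x = 0)
include hh hmom

theorem setIntegral_eval_exp_neg_mul_eq_zero {q : ℝ[X]} (hq : q.eval 0 = 0) :
    ∫ x in Ioi 0, q.eval (exp (-x)) * h x = 0 := by
  have hterm (i : ℕ) : IntegrableOn (fun x => q.coeff i * exp (-x) ^ i * h x) (Ioi 0) := by
    simpa only [IntegrableOn, mul_assoc] using (integrableOn_comp_exp_neg_mul hh (φ := (· ^ i))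
      (by fun_prop)).const_mul (q.coeff i)
  simp_rw [eval_eq_sum_range, Finset.sum_mul]
  rw [integral_finsetSum _ fun i _ => hterm i, Finset.sum_range_succ']
  simp [coeff_zero_eq_eval_zero, hq, mul_assoc, integral_const_mul, hmom]

theorem setIntegral_comp_exp_neg_mul_eq_zero {G : ℝ → ℝ} (hG : ContinuousOn G (Icc 0 1))
    (hG0 : G 0 = 0) : ∫ x in Ioi 0, G (exp (-x)) * h x = 0 := by
  have hbound : ∀ ε > 0, |∫ x in Ioi 0, G (exp (-x)) * h x| ≤ ε * ∫ x in Ioi 0, ‖h x‖ := by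
    intro ε hε
    obtain ⟨q, hq0, hq⟩ :=
      exists_polynomial_near_of_continuousOn_of_eq_zero hG ⟨le_rfl, zero_le_one⟩ hG0 hε
    calc |∫ x in Ioi 0, G (exp (-x)) * h x|
        = ‖∫ x in Ioi 0, (G (exp (-x)) * h x - q.eval (exp (-x)) * h x)‖ := by
          rw [integral_sub (integrableOn_comp_exp_neg_mul hh hG)
            (integrableOn_comp_exp_neg_mul hh q.continuousOn),
            setIntegral_eval_exp_neg_mul_eq_zero hh hmom hq0, sub_zero, Real.norm_eq_abs]
      _ ≤ ∫ x in Ioi 0, ε * ‖h x‖ := by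
          refine norm_integral_le_of_norm_le (hh.norm.const_mul ε) ?_
          refine (ae_restrict_iff' measurableSet_Ioi).2 (Eventually.of_forall fun x hx => ?_)
          rw [← sub_mul, norm_mul, Real.norm_eq_abs, abs_sub_comm]
          exact mul_le_mul_of_nonneg_right (hq _ (exp_neg_mem_Icc (le_of_lt hx))).le (norm_nonneg _)
      _ = ε * ∫ x in Ioi 0, ‖h x‖ := integral_const_mul ε _
  refine abs_eq_zero.1 (le_antisymm ?_ (abs_nonneg _))
  refine ge_of_tendsto (x := 𝓝[>] (0 : ℝ)) ?_ (eventually_nhdsWithin_of_forall hbound)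
  simpa using ((continuous_mul_const (∫ x in Ioi 0, ‖h x‖)).tendsto 0).mono_left nhdsWithin_le_nhds

theorem ae_eq_zero_of_setIntegral_exp_neg_pow_mul_eq_zero : h =ᵐ[volume.restrict (Ioi 0)] 0 := by
  have htest := (isOpen_Ioi (a := (0 : ℝ))).ae_eq_zero_of_integral_contDiff_smul_eq_zero
    (μ := volume.restrict (Ioi 0)) (hh.locallyIntegrable.locallyIntegrableOn _)
    fun g hg hgc hgs => ?_
  · filter_upwards [htest, ae_restrict_mem measurableSet_Ioi] with x hx hx0 using hx hx0
  have hg0 : g 0 = 0 := image_eq_zero_of_notMem_tsupport fun h0 => self_notMem_Ioi (hgs h0)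
  calc ∫ x in Ioi 0, g x • h x = ∫ x in Ioi 0, (fun t => g (-Real.log t)) (exp (-x)) * h x := by
        simp
    _ = 0 := setIntegral_comp_exp_neg_mul_eq_zero hh hmom
        (hg.continuous.comp_neg_log_of_hasCompactSupport hgc hg0).continuousOn (by simp [hg0])

end Moments

theorem laplace_zero_of_measurable_general
    (f : ℝ → ℝ) (a : ℝ)
    (hint : IntegrableOn (fun x => f x * Real.exp (-a * x)) (Ioi (0:ℝ)))
    (h : ∀ s : ℝ, a < s → ∫ x in Ioi (0:ℝ), f x * Real.exp (-s * x) = 0) :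
    f =ᵐ[volume.restrict (Ioi (0:ℝ))] 0 := by
  have hmom (n : ℕ) : ∫ x in Ioi 0, exp (-x) ^ (n + 1) * (f x * exp (-a * x)) = 0 := by
    have hexp (x : ℝ) : exp (-x) ^ (n + 1) * (f x * exp (-a * x)) =
        f x * exp (-(a + (n + 1)) * x) := by
      rw [← exp_nat_mul, mul_left_comm, ← exp_add]
      push_cast
      ring_nf
    simp_rw [hexp]
    exact h _ (by linarith [n.cast_nonneg (α := ℝ)])
  filter_upwards [ae_eq_zero_of_setIntegral_exp_neg_pow_mul_eq_zero hint hmom] with x hx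
  exact (mul_eq_zero.1 hx).resolve_right (exp_ne_zero _)

theorem laplace_zero_of_measurable
    (f : ℝ → ℝ) (hf : Measurable f) (a : ℝ) (ha : 0 ≤ a)
    (hint : IntegrableOn (fun x => f x * Real.exp (-a * x)) (Ioi (0:ℝ)))
    (h : ∀ s : ℝ, a < s → ∫ x in Ioi (0:ℝ), f x * Real.exp (-s * x) = 0) :
    f =ᵐ[volume.restrict (Ioi (0:ℝ))] 0 :=
  laplace_zero_of_measurable_general f a hint h
end

section
/- Let (λ_k) be a sequence of positive real numbers with lim λ_k = ∞ and ∑ 1/λ_k = ∞, and let q > 0. Then the product ∏_{k=1}^n |1 - q/λ_k| tends to 0 as n → ∞. -/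
open Filter Finset Real

/- Since `λₖ → ∞`, eventually `0 ≤ q / λₖ ≤ 1`; there `|1 - q / λₖ| = 1 - q / λₖ ≤ exp (-q / λₖ)`,
so the product over the tail is at most `exp (-q ∑ 1 / λₖ)`, which tends to `0` because the series
diverges. The finitely many leading factors only contribute a constant. -/

theorem abs_one_sub_le_exp_neg {x : ℝ} (hx : x ≤ 1) : |1 - x| ≤ exp (-x) := by
  rw [abs_of_nonneg (sub_nonneg.2 hx)]
  linarith [add_one_le_exp (-x)]

theorem prod_abs_one_sub_le_exp_neg_sum {ι : Type*} (s : Finset ι) {a : ι → ℝ}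
    (ha : ∀ i ∈ s, a i ≤ 1) :
    ∏ i ∈ s, |1 - a i| ≤ exp (-∑ i ∈ s, a i) := by
  rw [← sum_neg_distrib, exp_sum]
  exact prod_le_prod (fun _ _ => abs_nonneg _)
    fun i hi => abs_one_sub_le_exp_neg (ha i hi)

theorem tendsto_prod_abs_one_sub_of_forall_mem_Icc {a : ℕ → ℝ} (ha : ∀ k, a k ∈ Set.Icc 0 1)
    (hdiv : ¬ Summable a) :
    Tendsto (fun n => ∏ k ∈ range n, |1 - a k|) atTop (nhds 0) := by
  have hsum : Tendsto (fun n => ∑ k ∈ range n, a k) atTop atTop :=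
    (not_summable_iff_tendsto_nat_atTop_of_nonneg fun k => (ha k).1).1 hdiv
  refine squeeze_zero (fun n => prod_nonneg fun _ _ => abs_nonneg _)
    (fun n => prod_abs_one_sub_le_exp_neg_sum _ fun k _ => (ha k).2) ?_
  exact tendsto_exp_atBot.comp (tendsto_neg_atTop_atBot.comp hsum)

theorem tendsto_prod_abs_one_sub_of_not_summable {a : ℕ → ℝ}
    (ha : ∀ᶠ k in atTop, a k ∈ Set.Icc 0 1) (hdiv : ¬ Summable a) :
    Tendsto (fun n => ∏ k ∈ range n, |1 - a k|) atTop (nhds 0) := by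
  obtain ⟨N, hN⟩ := ha.exists_forall_of_atTop
  have htail : Tendsto (fun n => ∏ k ∈ range n, |1 - a (N + k)|) atTop (nhds 0) := by
    refine tendsto_prod_abs_one_sub_of_forall_mem_Icc (fun k => hN _ (Nat.le_add_right N k)) ?_
    simpa only [add_comm N] using (summable_nat_add_iff N).not.2 hdiv
  rw [← tendsto_add_atTop_iff_nat N]
  simpa only [add_comm _ N, prod_range_add, mul_zero] using htail.const_mul _

theorem prod_abs_one_sub_div_tendsto_zero
    (l : ℕ → ℝ) (hpos : ∀ k, 0 < l k)
    (htop : Tendsto l atTop atTop)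
    (hdiv : ¬ Summable (fun k => 1 / l k))
    (q : ℝ) (hq : 0 < q) :
    Tendsto (fun n => ∏ k ∈ Finset.range n, |1 - q / l k|) atTop (nhds 0) := by
  refine tendsto_prod_abs_one_sub_of_not_summable ?_ ?_
  · filter_upwards [htop.eventually_ge_atTop q] with k hk
    exact ⟨div_nonneg hq.le (hpos k).le, (div_le_one (hpos k)).2 hk⟩
  · simpa only [mul_one_div] using (summable_mul_left_iff hq.ne').not.2 hdiv
end
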